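/- Let X: {1,...,n} → ℤ be strictly decreasing, fix 1 ≤ k ≤ n, and define X̃ by X̃(k) = X(k)+1 and X̃(j) = X(j) for j ≠ k. Let B_0, B_1, ..., B_{n-1} be any integer sequence with B_{ℓ+1} ≤ B_ℓ - 1 for all ℓ. Define τ = min{ℓ ∈ {0,...,n-1} : B_ℓ > X(ℓ+1)} and τ̃ = min{ℓ ∈ {0,...,n-1} : B_ℓ > X̃(ℓ+1)} (each equal to n if no such ℓ exists). Then τ̃ = τ unless τ = k-1 and B_{k-1} = X(k)+1, in which case τ̃ > τ. -/
import Mathlib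


theorem hitting_time_comparison (n k : ℕ) (X B : ℕ → ℤ)
    (hk : 1 ≤ k) (hkn : k ≤ n)
    (hX : ∀ i j, 1 ≤ i → i < j → j ≤ n → X j < X i)
    (hB : ∀ ℓ, ℓ + 1 ≤ n - 1 → B (ℓ + 1) ≤ B ℓ - 1) :
    let Xt := Function.update X k (X k + 1)
    let τ := sInf {ℓ : ℕ | (ℓ < n ∧ X (ℓ + 1) < B ℓ) ∨ ℓ = n}
    let τt := sInf {ℓ : ℕ | (ℓ < n ∧ Xt (ℓ + 1) < B ℓ) ∨ ℓ = n}
    (¬(τ = k - 1 ∧ B (k - 1) = X k + 1) → τt = τ) ∧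
    ((τ = k - 1 ∧ B (k - 1) = X k + 1) → τ < τt) := by
  intro Xt τ τt
  have hXtk : Xt k = X k + 1 := Function.update_self _ _ _
  have hXt : ∀ ℓ : ℕ, ℓ ≠ k - 1 → Xt (ℓ + 1) = X (ℓ + 1) := by
    intro ℓ h
    exact Function.update_of_ne (by omega) _ _
  set S := {ℓ : ℕ | (ℓ < n ∧ X (ℓ + 1) < B ℓ) ∨ ℓ = n} with hS
  set St := {ℓ : ℕ | (ℓ < n ∧ Xt (ℓ + 1) < B ℓ) ∨ ℓ = n} with hSt
  have hsub : St ⊆ S := by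
    intro ℓ hl
    rcases hl with ⟨h1, h2⟩ | h
    · by_cases hℓ : ℓ = k - 1
      · have hlk : ℓ + 1 = k := by omega
        rw [hlk, hXtk] at h2
        refine Or.inl ⟨h1, ?_⟩
        rw [hlk]
        omega
      · exact Or.inl ⟨h1, by rwa [hXt ℓ hℓ] at h2⟩
    · exact Or.inr h
  have hne : S.Nonempty := ⟨n, Or.inr rfl⟩
  have hnet : St.Nonempty := ⟨n, Or.inr rfl⟩
  have hτmem : τ ∈ S := Nat.sInf_mem hne
  have hτtmem : τt ∈ St := Nat.sInf_mem hnet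
  have hle : τ ≤ τt := Nat.sInf_le (hsub hτtmem)
  constructor
  · intro hnot
    have hτSt : τ ∈ St := by
      rcases hτmem with ⟨h1, h2⟩ | h
      · by_cases hℓ : τ = k - 1
        · have hB' : B (k - 1) ≠ X k + 1 := fun hb => hnot ⟨hℓ, hb⟩
          have hlk : τ + 1 = k := by omega
          rw [hlk] at h2
          have h2' : X k < B (k - 1) := hℓ ▸ h2
          refine Or.inl ⟨h1, ?_⟩
          rw [hlk, hXtk, hℓ]
          omega
        · exact Or.inl ⟨h1, by rw [hXt τ hℓ]; exact h2⟩
      · exact Or.inr h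
    exact le_antisymm (Nat.sInf_le hτSt) hle
  · rintro ⟨h1, h2⟩
    have hτnotSt : τ ∉ St := by
      intro hmem
      rcases hmem with ⟨hlt, hlt2⟩ | heq
      · rw [h1] at hlt2
        have hlk : k - 1 + 1 = k := by omega
        rw [hlk, hXtk] at hlt2
        omega
      · omega
    have : τ ≠ τt := fun h => hτnotSt (h ▸ hτtmem)
    omega
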